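/- Let n, a, λ be positive integers with λ ≥ e^e and 1 ≤ a ≤ n. Let X be a random n-bit string with exactly a zeros, and let X̃ be the best of λ independent offspring each generated from X by flipping each bit independently with probability 1/n, where 'best' means maximal number of ones. Then Pr[|X̃|₁ - |X|₁ ≥ ⌈ln λ⌉ | |X̃|₁ > |X|₁] ≤ λ(ne + aλ)a^{ln λ - 1}/(n ln λ)^{ln λ}, where |·|₁ denotes the number of ones. -/

import Mathlib

open MeasureTheory ProbabilityTheory
open scoped ENNReal

/-- The distribution of a single flip indicator: `true` (flip) with probability `1/n`. -/
noncomputable def flipPMF (n : ℕ) (hn : 1 ≤ n) : PMF Bool :=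
  PMF.bernoulli ((n : NNReal))⁻¹ (inv_le_one_of_one_le₀ (by exact_mod_cast hn))

/-- Product measure of `lam` independent standard bit-wise mutations (flip indicators)
on `n`-bit strings, each bit flipped independently with probability `1/n`. -/
noncomputable def mutationsMeasure (n lam : ℕ) (hn : 1 ≤ n) :
    Measure (Fin lam → Fin n → Bool) :=
  Measure.pi (fun _ => Measure.pi (fun _ => (flipPMF n hn).toMeasure))

/-- Number of ones in a bit string. -/
def onesCount {n : ℕ} (x : Fin n → Bool) : ℕ :=
  (Finset.univ.filter (fun i => x i = true)).card

/-- The number of ones of the best (maximal number of ones) of the `lam` offspring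
obtained from `X` by applying the flip indicators `ω`. -/
def bestOnes {n lam : ℕ} (X : Fin n → Bool) (ω : Fin lam → Fin n → Bool) : ℕ :=
  Finset.univ.sup (fun j : Fin lam => onesCount (fun i => xor (ω j i) (X i)))

/-!
Write `k = ⌈ln λ⌉`. An offspring gains `k` ones only if at least `k` of the `a` zero bits flip,
so a union bound over the `λ` offspring and the `k`-subsets of zeros gives
`Pr[gain ≥ k] ≤ λ C(a,k) n⁻ᵏ ≤ λ (e a / (n k))ᵏ ≤ λ (e a / (n ln λ))^{ln λ}`,
the last step because `t ↦ (c/t)ᵗ` decreases for `t ≥ c/e`; and `e^{ln λ} = λ`.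
An offspring improves with probability at least `a (1/n)(1 - 1/n)ⁿ⁻¹ ≥ a/(en)` (flip exactly one
zero bit), so some offspring improves with probability `1 - (1 - p)^λ ≥ aλ/(ne + aλ)`.
The conditional probability is the quotient of the two bounds.
-/

open Finset

section IIDProduct

variable {ι α : Type*} [Fintype ι] [MeasurableSpace α] (ν : Measure α) [IsProbabilityMeasure ν]

lemma measureReal_pi_forall_mem (T : Finset ι) (S : Set α) :
    (Measure.pi fun _ : ι => ν).real {x | ∀ i ∈ T, x i ∈ S} = ν.real S ^ #T := by
  classical
  have hpi : {x : ι → α | ∀ i ∈ T, x i ∈ S}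
      = Set.univ.pi fun i => if i ∈ T then S else .univ := by
    ext x; simp only [Set.mem_ofPred_eq, Set.mem_pi, Set.mem_univ, true_implies]
    exact forall_congr' fun i => by split_ifs with hi <;> simp [hi]
  rw [hpi, measureReal_def, Measure.pi_pi, ENNReal.toReal_prod]
  simp only [apply_ite, measure_univ, ENNReal.toReal_one, prod_ite_mem, univ_inter,
    prod_const, measureReal_def]

lemma measureReal_pi_le_choose_mul_pow (p : α → Prop) [DecidablePred p] (Z : Finset ι) (k : ℕ) :
    (Measure.pi fun _ : ι => ν).real {x | k ≤ #{i ∈ Z | p (x i)}}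
      ≤ (#Z).choose k * ν.real {a | p a} ^ k := by
  have hcover : {x : ι → α | k ≤ #{i ∈ Z | p (x i)}}
      ⊆ ⋃ T ∈ Z.powersetCard k, {x | ∀ i ∈ T, p (x i)} := by
    intro x hx
    obtain ⟨T, hT, hTk⟩ := exists_subset_card_eq hx
    exact Set.mem_biUnion (mem_powersetCard.2 ⟨hT.trans (filter_subset _ _), hTk⟩)
      fun i hi => (mem_filter.1 (hT hi)).2
  refine (measureReal_mono hcover (measure_ne_top _ _)).trans
    ((measureReal_biUnion_finset_le _ _).trans_eq ?_)
  rw [sum_congr rfl fun T hT =>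
      (mem_powersetCard.1 hT).2 ▸ measureReal_pi_forall_mem ν T {a | p a},
    sum_const, card_powersetCard, nsmul_eq_mul]

lemma measureReal_pi_exists_mem_le (E : Set α) :
    (Measure.pi fun _ : ι => ν).real {x | ∃ i, x i ∈ E} ≤ Fintype.card ι * ν.real E := by
  have hunion : {x : ι → α | ∃ i, x i ∈ E} = ⋃ i, {x | ∀ j ∈ ({i} : Finset ι), x j ∈ E} := by
    ext x; simp
  refine (hunion ▸ measureReal_iUnion_fintype_le _).trans_eq ?_
  simp only [measureReal_pi_forall_mem, card_singleton, pow_one, sum_const, card_univ,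
    nsmul_eq_mul]

lemma measureReal_pi_exists_mem (E : Set α) (hE : MeasurableSet E) :
    (Measure.pi fun _ : ι => ν).real {x | ∃ i, x i ∈ E}
      = 1 - (1 - ν.real E) ^ Fintype.card ι := by
  have hcompl : {x : ι → α | ∃ i, x i ∈ E}ᶜ = {x | ∀ i ∈ univ, x i ∈ Eᶜ} := by
    ext x; simp
  have hmeas : MeasurableSet {x : ι → α | ∃ i, x i ∈ E} := by
    rw [Set.ofPred_exists]
    exact .iUnion fun i => measurable_pi_apply i hE
  rw [← compl_compl {x : ι → α | ∃ i, x i ∈ E}, probReal_compl_eq_one_sub hmeas.compl, hcompl,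
    measureReal_pi_forall_mem, card_univ, probReal_compl_eq_one_sub hE]

end IIDProduct

section RealBounds

open Real Set

lemma exp_neg_one_le_one_sub_inv_pow (n : ℕ) (hn : 1 ≤ n) :
    exp (-1) ≤ (1 - (n : ℝ)⁻¹) ^ (n - 1) := by
  obtain ⟨m, rfl⟩ := Nat.exists_eq_add_of_le' hn
  rcases m.eq_zero_or_pos with rfl | hm
  · simp
  have hbase : 1 - ((m + 1 : ℕ) : ℝ)⁻¹ = (1 + (m : ℝ)⁻¹)⁻¹ := by
    field_simp; push_cast; ring
  rw [Nat.add_sub_cancel, hbase, inv_pow, exp_neg]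
  exact inv_anti₀ (by positivity) one_add_inv_pow_le_exp

lemma mul_div_one_add_mul_le_one_sub_one_sub_pow {s : ℝ} (hs₀ : 0 ≤ s) (hs₁ : s ≤ 1) (m : ℕ) :
    m * s / (1 + m * s) ≤ 1 - (1 - s) ^ m := by
  have hpos : 0 < 1 + m * s := by positivity
  have hpow : (1 - s) ^ m ≤ (1 + m * s)⁻¹ :=
    calc (1 - s) ^ m ≤ exp (-s) ^ m := pow_le_pow_left₀ (by linarith) (one_sub_le_exp_neg s) m
      _ = (exp (m * s))⁻¹ := by rw [← exp_nat_mul, ← exp_neg, mul_neg]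
      _ ≤ (1 + m * s)⁻¹ := inv_anti₀ hpos (by linarith [add_one_le_exp (m * s)])
  have hfrac : m * s / (1 + m * s) = 1 - (1 + m * s)⁻¹ := by field_simp; ring
  linarith

lemma Nat.choose_le_exp_mul_div_pow (a k : ℕ) :
    (a.choose k : ℝ) ≤ (exp 1 * a / k) ^ k := by
  rcases k.eq_zero_or_pos with rfl | hk
  · simp
  have hfact : (k : ℝ) ^ k ≤ k.factorial * exp 1 ^ k := by
    rw [← exp_nat_mul, mul_one, ← div_le_iff₀' (by positivity)]
    exact pow_div_factorial_le_exp _ k.cast_nonneg k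
  calc (a.choose k : ℝ) ≤ a ^ k / k.factorial := Nat.choose_le_pow_div k a
    _ ≤ (exp 1 * a / k) ^ k := by
      rw [div_pow, mul_pow, div_le_div_iff₀ (by positivity) (by positivity)]
      nlinarith [pow_nonneg (a.cast_nonneg : (0:ℝ) ≤ a) k]

lemma div_rpow_self_antitoneOn {c : ℝ} (hc : 0 < c) :
    AntitoneOn (fun t : ℝ => (c / t) ^ t) (Ici (c / exp 1)) := by
  intro s hs t ht hst
  have hs₀ : 0 < s := lt_of_lt_of_le (by positivity) hs
  have ht₀ : 0 < t := hs₀.trans_le hst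
  have hlogs : log c - 1 ≤ log s := by
    rw [sub_le_iff_le_add, ← log_exp 1, ← log_mul hs₀.ne' (exp_pos 1).ne']
    exact log_le_log hc (by rwa [Set.mem_Ici, div_le_iff₀ (exp_pos 1)] at hs)
  have hratio : 1 - s / t ≤ log t - log s := by
    rw [← log_div ht₀.ne' hs₀.ne']
    simpa using one_sub_inv_le_log_of_pos (div_pos ht₀ hs₀)
  -- `t ↦ t log (c/t)` is concave with its maximum at `c/e`: compare it with its tangent at `s`.
  have htangent : t - s ≤ t * (log t - log s) := by
    have := mul_le_mul_of_nonneg_left hratio ht₀.le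
    rwa [mul_sub, mul_one, mul_div_cancel₀ _ ht₀.ne'] at this
  show (c / t) ^ t ≤ (c / s) ^ s
  rw [rpow_def_of_pos (div_pos hc ht₀), rpow_def_of_pos (div_pos hc hs₀),
    log_div hc.ne' ht₀.ne', log_div hc.ne' hs₀.ne']
  refine exp_le_exp.2 ?_
  nlinarith [mul_le_mul_of_nonneg_left hlogs (sub_nonneg.2 hst)]

end RealBounds

section Mutation

variable {n : ℕ}

def mutate (x flips : Fin n → Bool) : Fin n → Bool := fun i => xor (flips i) (x i)

def flipAt (z : Fin n) : Fin n → Bool := fun i => decide (i = z)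

lemma onesCount_mutate_le (x flips : Fin n → Bool) :
    onesCount (mutate x flips) ≤ onesCount x + #{i ∈ {i | x i = false} | flips i = true} := by
  refine (card_le_card fun i hi => ?_).trans (card_union_le _ _)
  simp only [mutate, mem_filter, mem_univ, true_and, mem_union] at hi ⊢
  cases hx : x i <;> cases hf : flips i <;> simp_all

lemma onesCount_lt_onesCount_mutate_flipAt {x : Fin n → Bool} {z : Fin n} (hz : x z = false) :
    onesCount x < onesCount (mutate x (flipAt z)) := by
  have hinsert : univ.filter (fun i => mutate x (flipAt z) i = true)
      = insert z (univ.filter fun i => x i = true) := by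
    ext i
    by_cases hiz : i = z
    · subst hiz; simp [mutate, flipAt, hz]
    · simp [mutate, flipAt, hiz]
  unfold onesCount
  rw [hinsert, card_insert_of_notMem (by simp [hz])]
  exact Nat.lt_succ_self _

lemma flipAt_injective : Function.Injective (flipAt (n := n)) := fun z w h => by
  simpa [flipAt] using congrFun h z

lemma lt_bestOnes_iff {lam : ℕ} (X : Fin n → Bool) (ω : Fin lam → Fin n → Bool) (m : ℕ) :
    m < bestOnes X ω ↔ ∃ j, m < onesCount (mutate X (ω j)) := by
  simp only [bestOnes, Finset.lt_sup_iff, mem_univ, true_and]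
  rfl

lemma le_bestOnes_iff {lam : ℕ} (X : Fin n → Bool) (ω : Fin lam → Fin n → Bool) {m : ℕ}
    (hm : 0 < m) : m ≤ bestOnes X ω ↔ ∃ j, m ≤ onesCount (mutate X (ω j)) := by
  simp only [bestOnes, Finset.le_sup_iff (bot_eq_zero (α := ℕ) ▸ hm), mem_univ, true_and]
  rfl

variable (hn : 1 ≤ n)

noncomputable def mutationMeasure : Measure (Fin n → Bool) :=
  Measure.pi fun _ => (flipPMF n hn).toMeasure

lemma mutationsMeasure_eq_pi (lam : ℕ) :
    mutationsMeasure n lam hn = Measure.pi fun _ : Fin lam => mutationMeasure hn := rfl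

instance : IsProbabilityMeasure (mutationMeasure hn) := by
  unfold mutationMeasure; infer_instance

instance (lam : ℕ) : IsProbabilityMeasure (mutationsMeasure n lam hn) := by
  rw [mutationsMeasure_eq_pi]; infer_instance

lemma flipPMF_real_true : (flipPMF n hn).toMeasure.real {true} = (n : ℝ)⁻¹ := by
  rw [measureReal_def, PMF.toMeasure_apply_singleton _ _ (measurableSet_singleton _), flipPMF,
    PMF.bernoulli_apply, cond_true, ENNReal.coe_toReal]
  simp

lemma flipPMF_real_false : (flipPMF n hn).toMeasure.real {false} = 1 - (n : ℝ)⁻¹ := by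
  rw [measureReal_def, PMF.toMeasure_apply_singleton _ _ (measurableSet_singleton _), flipPMF,
    PMF.bernoulli_apply, cond_false, ENNReal.coe_toReal,
    NNReal.coe_sub (inv_le_one_of_one_le₀ (by exact_mod_cast hn))]
  simp

lemma mutationMeasure_real_flipAt (z : Fin n) :
    (mutationMeasure hn).real {flipAt z} = (n : ℝ)⁻¹ * (1 - (n : ℝ)⁻¹) ^ (n - 1) := by
  have hrest : ∀ i ∈ univ.erase z, (flipPMF n hn).toMeasure.real {flipAt z i} = 1 - (n : ℝ)⁻¹ :=
    fun i hi => by simp [flipAt, ne_of_mem_erase hi, flipPMF_real_false]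
  rw [measureReal_def, mutationMeasure, Measure.pi_singleton, ENNReal.toReal_prod,
    ← mul_prod_erase univ _ (mem_univ z)]
  simp_rw [← measureReal_def]
  rw [prod_congr rfl hrest, prod_const, card_erase_of_mem (mem_univ z), card_univ,
    Fintype.card_fin]
  simp [flipAt, flipPMF_real_true]

lemma mutationMeasure_real_jump_le (x : Fin n → Bool) (k : ℕ) :
    (mutationMeasure hn).real {flips | onesCount x + k ≤ onesCount (mutate x flips)}
      ≤ (#{i | x i = false}).choose k * (n : ℝ)⁻¹ ^ k := by
  refine (measureReal_mono (fun flips h => ?_) (measure_ne_top _ _)).trans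
    ((measureReal_pi_le_choose_mul_pow _ (· = true) {i | x i = false} k).trans_eq ?_)
  · have := onesCount_mutate_le x flips
    simp only [Set.mem_ofPred_eq] at h ⊢
    omega
  · rw [Set.ofPred_eq_eq_singleton, flipPMF_real_true]

lemma card_zeros_mul_le_mutationMeasure_real_improve (x : Fin n → Bool) :
    #{i | x i = false} * ((n : ℝ)⁻¹ * (1 - (n : ℝ)⁻¹) ^ (n - 1))
      ≤ (mutationMeasure hn).real {flips | onesCount x < onesCount (mutate x flips)} := by
  have hsub : ⋃ z ∈ ({i | x i = false} : Finset (Fin n)), {flipAt z}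
      ⊆ {flips | onesCount x < onesCount (mutate x flips)} := by
    simp only [Set.iUnion_subset_iff, Set.singleton_subset_iff]
    intro z hz
    exact onesCount_lt_onesCount_mutate_flipAt (mem_filter.1 hz).2
  refine le_of_eq_of_le ?_ (measureReal_mono hsub (measure_ne_top _ _))
  rw [measureReal_biUnion_finset ?_ fun _ _ => measurableSet_singleton _,
    sum_congr rfl fun z _ => mutationMeasure_real_flipAt hn z, sum_const, nsmul_eq_mul]
  exact fun z _ w _ hzw => Set.disjoint_singleton.2 fun h => hzw (flipAt_injective h)

end Mutation

section BestOfLambda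

variable {n : ℕ} (hn : 1 ≤ n) (lam : ℕ) (X : Fin n → Bool)

lemma mutationsMeasure_real_jump_le {k : ℕ} (hk : 0 < k) :
    (mutationsMeasure n lam hn).real {ω | onesCount X + k ≤ bestOnes X ω}
      ≤ lam * ((#{i | X i = false}).choose k * (n : ℝ)⁻¹ ^ k) := by
  have hexists : {ω : Fin lam → Fin n → Bool | onesCount X + k ≤ bestOnes X ω}
      = {ω | ∃ j, ω j ∈ {flips | onesCount X + k ≤ onesCount (mutate X flips)}} := by
    ext ω
    exact le_bestOnes_iff X ω (by omega)
  rw [hexists, mutationsMeasure_eq_pi]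
  refine (measureReal_pi_exists_mem_le _ _).trans ?_
  rw [Fintype.card_fin]
  gcongr
  exact mutationMeasure_real_jump_le hn X k

lemma div_le_mutationsMeasure_real_improve :
    #{i | X i = false} * lam / (n * Real.exp 1 + #{i | X i = false} * lam)
      ≤ (mutationsMeasure n lam hn).real {ω | onesCount X < bestOnes X ω} := by
  set a : ℕ := #{i | X i = false}
  set E := {flips | onesCount X < onesCount (mutate X flips)}
  set s : ℝ := a / (Real.exp 1 * n) with hs
  have hn₀ : (0 : ℝ) < n := by exact_mod_cast hn
  have han : (a : ℝ) ≤ n := by exact_mod_cast (card_filter_le _ _).trans_eq (card_fin n)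
  have hs₀ : 0 ≤ s := by positivity
  have hs₁ : s ≤ 1 := by
    rw [div_le_one (by positivity)]
    nlinarith [Real.add_one_le_exp 1]
  have hsE : s ≤ (mutationMeasure hn).real E := by
    refine le_trans ?_ (card_zeros_mul_le_mutationMeasure_real_improve hn X)
    calc s = a * ((n : ℝ)⁻¹ * Real.exp (-1)) := by rw [hs, Real.exp_neg]; field_simp
      _ ≤ a * ((n : ℝ)⁻¹ * (1 - (n : ℝ)⁻¹) ^ (n - 1)) := by
        gcongr; exact exp_neg_one_le_one_sub_inv_pow n hn
  have hexists : {ω : Fin lam → Fin n → Bool | onesCount X < bestOnes X ω}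
      = {ω | ∃ j, ω j ∈ E} := by
    ext ω
    exact lt_bestOnes_iff X ω _
  rw [hexists, mutationsMeasure_eq_pi,
    measureReal_pi_exists_mem _ _ (Set.toFinite E).measurableSet, Fintype.card_fin]
  calc (a : ℝ) * lam / (n * Real.exp 1 + a * lam) = lam * s / (1 + lam * s) := by
        rw [hs]; field_simp
    _ ≤ 1 - (1 - s) ^ lam := mul_div_one_add_mul_le_one_sub_one_sub_pow hs₀ hs₁ lam
    _ ≤ 1 - (1 - (mutationMeasure hn).real E) ^ lam := by
      gcongr
      exact sub_nonneg.2 measureReal_le_one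

end BestOfLambda

lemma cond_eq_ofReal_measureReal_div {Ω : Type*} [MeasurableSpace Ω] (μ : Measure Ω)
    [IsFiniteMeasure μ] {A B : Set Ω} (hB : MeasurableSet B) (hAB : A ⊆ B) :
    cond μ B A = ENNReal.ofReal (μ.real A / μ.real B) := by
  have hfinite : μ A / μ B ≠ ⊤ := by
    rcases eq_or_ne (μ B) 0 with h | h
    · simp [measure_mono_null hAB h]
    · exact ENNReal.div_ne_top (measure_ne_top _ _) h
  rw [cond_apply hB, Set.inter_eq_right.2 hAB, ← ENNReal.div_eq_inv_mul, measureReal_def,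
    measureReal_def, ← ENNReal.toReal_div, ENNReal.ofReal_toReal hfinite]

open Real in
lemma choose_mul_inv_pow_ceil_le {a n : ℕ} {L : ℝ} (ha : 0 < a) (hn : 0 < n) (hL : a / n ≤ L) :
    (a.choose ⌈L⌉₊ : ℝ) * (n : ℝ)⁻¹ ^ ⌈L⌉₊ ≤ exp L * a ^ L / (n * L) ^ L := by
  set k := ⌈L⌉₊
  set c : ℝ := exp 1 * a / n with hc_def
  have hc : 0 < c := by positivity
  have hL₀ : 0 < L := lt_of_lt_of_le (by positivity) hL
  have hce : c / exp 1 = a / n := by rw [hc_def]; field_simp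
  calc (a.choose k : ℝ) * (n : ℝ)⁻¹ ^ k ≤ (exp 1 * a / k) ^ k * (n : ℝ)⁻¹ ^ k := by
        gcongr; exact Nat.choose_le_exp_mul_div_pow a k
    _ = (c / k) ^ (k : ℝ) := by rw [rpow_natCast, ← mul_pow, hc_def]; ring
    _ ≤ (c / L) ^ L := div_rpow_self_antitoneOn hc (by rwa [Set.mem_Ici, hce])
        (by rw [Set.mem_Ici, hce]; exact hL.trans (Nat.le_ceil L)) (Nat.le_ceil L)
    _ = exp L * a ^ L / (n * L) ^ L := by
      rw [show c / L = exp 1 * (a / (n * L)) by rw [hc_def]; field_simp,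
        mul_rpow (exp_pos 1).le (by positivity), exp_one_rpow,
        div_rpow (by positivity) (by positivity), mul_div_assoc]

theorem stmt_5_general (n a lam : ℕ) (hn : 1 ≤ n) (ha : 1 ≤ a) (han : a ≤ n)
    (hlamE : Real.exp (Real.exp 1) ≤ (lam : ℝ))
    (X : Fin n → Bool) (hX : (Finset.univ.filter (fun i => X i = false)).card = a) :
    (ProbabilityTheory.cond (mutationsMeasure n lam hn)
        {ω | onesCount X < bestOnes X ω})
      {ω | onesCount X + ⌈Real.log lam⌉₊ ≤ bestOnes X ω}
      ≤ ENNReal.ofReal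
          ((lam : ℝ) * ((n : ℝ) * Real.exp 1 + (a : ℝ) * (lam : ℝ))
            * (a : ℝ) ^ (Real.log lam - 1) / ((n : ℝ) * Real.log lam) ^ (Real.log lam)) := by
  set L := Real.log lam
  have hlam₀ : (0 : ℝ) < lam := (Real.exp_pos _).trans_le hlamE
  have hL : Real.exp 1 ≤ L := (Real.le_log_iff_exp_le hlam₀).2 hlamE
  have hk : 0 < ⌈L⌉₊ := Nat.ceil_pos.2 ((Real.exp_pos 1).trans_le hL)
  have haL : (a : ℝ) / n ≤ L := (div_le_one_of_le₀ (by exact_mod_cast han) n.cast_nonneg).trans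
    ((Real.one_le_exp zero_le_one).trans hL)
  have hjump : (a.choose ⌈L⌉₊ : ℝ) * (n : ℝ)⁻¹ ^ ⌈L⌉₊ ≤ lam * a ^ L / (n * L) ^ L := by
    simpa only [L, Real.exp_log hlam₀] using choose_mul_inv_pow_ceil_le ha hn haL
  have hupper := hX ▸ mutationsMeasure_real_jump_le hn lam X hk
  have hlower := hX ▸ div_le_mutationsMeasure_real_improve hn lam X
  have hAB : {ω : Fin lam → Fin n → Bool | onesCount X + ⌈L⌉₊ ≤ bestOnes X ω}
      ⊆ {ω | onesCount X < bestOnes X ω} := fun ω hω => (Nat.lt_add_of_pos_right hk).trans_le hω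
  rw [cond_eq_ofReal_measureReal_div _ (Set.toFinite _).measurableSet hAB]
  refine ENNReal.ofReal_le_ofReal ((div_le_div₀ (by positivity)
    (hupper.trans (mul_le_mul_of_nonneg_left hjump lam.cast_nonneg)) (by positivity)
    hlower).trans_eq ?_)
  rw [Real.rpow_sub_one (by positivity)]
  field_simp

theorem stmt_5 (n a lam : ℕ) (hn : 1 ≤ n) (ha : 1 ≤ a) (han : a ≤ n) (hlam : 1 ≤ lam)
    (hlamE : Real.exp (Real.exp 1) ≤ (lam : ℝ))
    (X : Fin n → Bool) (hX : (Finset.univ.filter (fun i => X i = false)).card = a) :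
    (ProbabilityTheory.cond (mutationsMeasure n lam hn)
        {ω | onesCount X < bestOnes X ω})
      {ω | onesCount X + ⌈Real.log lam⌉₊ ≤ bestOnes X ω}
      ≤ ENNReal.ofReal
          ((lam : ℝ) * ((n : ℝ) * Real.exp 1 + (a : ℝ) * (lam : ℝ))
            * (a : ℝ) ^ (Real.log lam - 1) / ((n : ℝ) * Real.log lam) ^ (Real.log lam)) :=
  stmt_5_general n a lam hn ha han hlamE X hX
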